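/- arXiv:2510.23914 — 8 statements merged into one kernel-verified Lean document; each statement's English description precedes it below -/
import Mathlib

section
/- Let n ≥ 1, let P be an n×n real row-stochastic matrix (nonnegative entries, each row summing to 1), let E be the n×n all-ones matrix, and let I be the identity. Then the matrix I + E − P is invertible if and only if the kernel of I − P (acting on column vectors) equals the span of the all-ones vector 𝟙. -/
/-- For an `n × n` row-stochastic matrix `P` (with `n ≥ 1`),
the matrix `I + E − P` (where `E` is the all-ones matrix) is invertible
iff `ker (I − P) = span {𝟙}`. -/
theorem unichain_iff_invertible
    (n : ℕ) (hn : 1 ≤ n)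
    (P : Matrix (Fin n) (Fin n) ℝ)
    (hP_nonneg : ∀ i j, 0 ≤ P i j)
    (hP_rowsum : ∀ i, ∑ j, P i j = 1) :
    IsUnit (1 + Matrix.of (fun _ _ => (1 : ℝ)) - P) ↔
      LinearMap.ker (Matrix.mulVecLin (1 - P)) =
        Submodule.span ℝ {(fun _ => (1 : ℝ) : Fin n → ℝ)} := by
  set E : Matrix (Fin n) (Fin n) ℝ := Matrix.of (fun _ _ => (1 : ℝ)) with hE
  set one : Fin n → ℝ := (fun _ => (1 : ℝ)) with hone
  have i0 : Fin n := ⟨0, hn⟩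
  have hP1 : P.mulVec one = one := by
    funext i
    simp [Matrix.mulVec, dotProduct, hone, hP_rowsum i]
  have hAmul : ∀ x : Fin n → ℝ, (1 + E - P).mulVec x =
      fun i => x i + (∑ j, x j) - P.mulVec x i := by
    intro x
    have hEx : E.mulVec x = fun _ => ∑ j, x j := by
      funext i
      simp [hE, hone, Matrix.mulVec, dotProduct]
    rw [Matrix.sub_mulVec, Matrix.add_mulVec, Matrix.one_mulVec, hEx]
    funext i
    simp
  have hMmul : ∀ x : Fin n → ℝ, (1 - P).mulVec x = x - P.mulVec x := by
    intro x
    simp [Matrix.sub_mulVec, Matrix.one_mulVec]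
  have h1ker : (1 - P : Matrix (Fin n) (Fin n) ℝ).mulVec one = 0 := by
    rw [hMmul, hP1, sub_self]
  have hsum1 : (∑ _j : Fin n, (1 : ℝ)) = (n : ℝ) := by simp
  constructor
  · intro hA
    have hinj : Function.Injective (1 + E - P).mulVec :=
      Matrix.mulVec_injective_iff_isUnit.2 hA
    apply le_antisymm
    · intro x hx
      have hx' : x - P.mulVec x = 0 := by
        have := hx
        simp only [LinearMap.mem_ker, Matrix.mulVecLin_apply] at this
        rw [← hMmul x]; exact this
      have hxP : P.mulVec x = x := by
        have := sub_eq_zero.mp hx'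
        exact this.symm
      set s : ℝ := ∑ j, x j with hs
      -- A x = s • 𝟙  and A ((s/n) • 𝟙) = s • 𝟙
      have hAx : (1 + E - P).mulVec x = fun _ => s := by
        rw [hAmul x, hxP]
        funext i; ring
      have hAone : (1 + E - P).mulVec ((s / n) • one) = fun _ => s := by
        rw [Matrix.mulVec_smul, hAmul one, hP1]
        funext i
        simp only [Pi.smul_apply, hone, smul_eq_mul, hsum1]
        field_simp
        ring
      have := hinj (hAx.trans hAone.symm)
      rw [Submodule.mem_span_singleton]
      exact ⟨s / n, this ▸ rfl⟩
    · rw [Submodule.span_le, Set.singleton_subset_iff]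
      simpa [LinearMap.mem_ker, Matrix.mulVecLin_apply, hMmul] using h1ker
  · intro hker
    -- bound: mulVec by P of a vector bounded by C stays bounded by C
    have hbound : ∀ (C : ℝ) (v : Fin n → ℝ), (∀ j, |v j| ≤ C) →
        ∀ i, |(P.mulVec v) i| ≤ C := by
      intro C v hv i
      have hC : 0 ≤ C := le_trans (abs_nonneg _) (hv i0)
      calc |(P.mulVec v) i| = |∑ j, P i j * v j| := rfl
        _ ≤ ∑ j, |P i j * v j| := Finset.abs_sum_le_sum_abs _ _
        _ ≤ ∑ j, P i j * C := by
            apply Finset.sum_le_sum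
            intro j _
            rw [abs_mul, abs_of_nonneg (hP_nonneg i j)]
            exact mul_le_mul_of_nonneg_left (hv j) (hP_nonneg i j)
        _ = C := by rw [← Finset.sum_mul, hP_rowsum i, one_mul]
    rw [Matrix.mulVec_injective_iff_isUnit.symm]
    -- injectivity: enough that kernel is trivial
    have hker0 : ∀ x : Fin n → ℝ, (1 + E - P).mulVec x = 0 → x = 0 := by
      intro x hx0
      set s : ℝ := ∑ j, x j with hs
      have hPx : P.mulVec x = fun i => x i + s := by
        funext i
        have := congrFun hx0 i
        rw [hAmul x] at this
        simp only [Pi.zero_apply] at this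
        linarith [this]
      -- iterate: P^[k] x = x + k s
      have hiter : ∀ k : ℕ, (P.mulVec)^[k] x = fun i => x i + k * s := by
        intro k
        induction k with
        | zero => funext i; simp
        | succ k ih =>
          rw [Function.iterate_succ_apply', ih]
          have : (fun i => x i + (k : ℝ) * s) = x + ((k : ℝ) * s) • one := by
            funext i; simp [hone]
          rw [this, Matrix.mulVec_add, Matrix.mulVec_smul, hP1, hPx]
          funext i
          simp only [Pi.add_apply, Pi.smul_apply, hone, smul_eq_mul, Nat.cast_succ]
          ring
      set C : ℝ := ∑ j, |x j| with hC
      have hxC : ∀ j, |x j| ≤ C := by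
        intro j
        rw [hC]
        exact Finset.single_le_sum (f := fun j => |x j|) (fun j _ => abs_nonneg _)
          (Finset.mem_univ j)
      have hiterC : ∀ k : ℕ, ∀ i, |(P.mulVec)^[k] x i| ≤ C := by
        intro k
        induction k with
        | zero => simpa using hxC
        | succ k ih =>
          rw [Function.iterate_succ_apply']
          exact hbound C _ ih
      have hksC : ∀ k : ℕ, (k : ℝ) * |s| ≤ C + |x i0| := by
        intro k
        have h1 := hiterC k i0
        rw [hiter k] at h1
        simp only at h1
        have h3 := abs_add_le (x i0 + (k : ℝ) * s) (-(x i0))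
        rw [abs_neg] at h3
        have h4 : x i0 + (k : ℝ) * s + -(x i0) = (k : ℝ) * s := by ring
        rw [h4, abs_mul, Nat.abs_cast] at h3
        linarith
      have hs0 : s = 0 := by
        by_contra hsne
        have hspos : 0 < |s| := abs_pos.mpr hsne
        obtain ⟨k, hk⟩ := exists_nat_gt ((C + |x i0|) / |s|)
        have := hksC k
        have h2 : (C + |x i0|) / |s| * |s| < (k : ℝ) * |s| :=
          mul_lt_mul_of_pos_right hk hspos
        rw [div_mul_cancel₀ _ (ne_of_gt hspos)] at h2
        linarith
      -- so P x = x, x ∈ ker(1-P) = span 𝟙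
      have hxker : x ∈ LinearMap.ker (Matrix.mulVecLin (1 - P)) := by
        simp only [LinearMap.mem_ker, Matrix.mulVecLin_apply]
        rw [hMmul, hPx]
        funext i
        simp [hs0]
      rw [hker, Submodule.mem_span_singleton] at hxker
      obtain ⟨c, hc⟩ := hxker
      have hsc : s = n * c := by
        rw [hs, ← hc]
        simp [hone, mul_comm]
      have hc0 : c = 0 := by
        have hn' : (0 : ℝ) < n := by exact_mod_cast hn
        rw [hs0] at hsc
        exact (mul_eq_zero.mp hsc.symm).resolve_left (ne_of_gt hn')
      rw [← hc, hc0]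
      simp
    intro a b hab
    have : (1 + E - P).mulVec (a - b) = 0 := by
      rw [Matrix.mulVec_sub, hab, sub_self]
    have := hker0 _ this
    exact sub_eq_zero.mp this
end

section
/- Let n ≥ 1, let Q be an n×n real row-stochastic matrix, and let φ ≥ 0 satisfy Q_{ij} ≥ φ for all i, j and nφ ≤ 1. Then for every vector v ∈ ℝⁿ, the span seminorm satisfies sp(Qv) ≤ (1 − nφ) · sp(v), where sp(w) = max_i w(i) − min_i w(i). -/
/-- The span seminorm of a vector: `sp w = max_i w i − min_i w i`. -/
noncomputable def sp {n : ℕ} (w : Fin n → ℝ) : ℝ := (⨆ i, w i) - ⨅ i, w i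

/-- If `Q` is row-stochastic with every entry at least `φ ≥ 0`
and `n * φ ≤ 1`, then `sp (Q v) ≤ (1 − n φ) · sp v`. -/
theorem span_contraction_of_entrywise_lower_bound
    (n : ℕ) (hn : 1 ≤ n)
    (Q : Matrix (Fin n) (Fin n) ℝ)
    (hQ_nonneg : ∀ i j, 0 ≤ Q i j)
    (hQ_rowsum : ∀ i, ∑ j, Q i j = 1)
    (φ : ℝ) (hφ : 0 ≤ φ)
    (hQφ : ∀ i j, φ ≤ Q i j)
    (hnφ : (n : ℝ) * φ ≤ 1)
    (v : Fin n → ℝ) :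
    sp (Q.mulVec v) ≤ (1 - (n : ℝ) * φ) * sp v := by
  have hne : Nonempty (Fin n) := ⟨⟨0, hn⟩⟩
  set S := ⨆ i, v i with hS
  set I := ⨅ i, v i with hI
  have hvle : ∀ j, v j ≤ S := fun j =>
    le_ciSup (Set.Finite.bddAbove (Set.finite_range v)) j
  have hvge : ∀ j, I ≤ v j := fun j =>
    ciInf_le (Set.Finite.bddBelow (Set.finite_range v)) j
  have hspv : 0 ≤ sp v := by
    have := (hvge ⟨0, hn⟩).trans (hvle ⟨0, hn⟩)
    simp only [sp]; linarith
  have key : ∀ i k, Q.mulVec v i - Q.mulVec v k ≤ (1 - (n : ℝ) * φ) * sp v := by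
    intro i k
    set m : Fin n → ℝ := fun j => min (Q i j) (Q k j) with hm
    have hms : (n : ℝ) * φ ≤ ∑ j, m j := by
      calc (n : ℝ) * φ = ∑ _j : Fin n, φ := by simp [mul_comm]
        _ ≤ ∑ j, m j := Finset.sum_le_sum fun j _ => le_min (hQφ i j) (hQφ k j)
    have heq : Q.mulVec v i - Q.mulVec v k
        = ∑ j, (Q i j - m j) * v j - ∑ j, (Q k j - m j) * v j := by
      simp only [Matrix.mulVec, dotProduct, sub_mul, Finset.sum_sub_distrib]
      ring
    have h1 : ∑ j, (Q i j - m j) * v j ≤ (1 - ∑ j, m j) * S := by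
      have : ∑ j, (Q i j - m j) * v j ≤ ∑ j, (Q i j - m j) * S :=
        Finset.sum_le_sum fun j _ =>
          mul_le_mul_of_nonneg_left (hvle j) (by simp [hm, min_le_left, sub_nonneg])
      calc ∑ j, (Q i j - m j) * v j ≤ ∑ j, (Q i j - m j) * S := this
        _ = (1 - ∑ j, m j) * S := by
            rw [← Finset.sum_mul, Finset.sum_sub_distrib, hQ_rowsum i]
    have h2 : (1 - ∑ j, m j) * I ≤ ∑ j, (Q k j - m j) * v j := by
      have : ∑ j, (Q k j - m j) * I ≤ ∑ j, (Q k j - m j) * v j :=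
        Finset.sum_le_sum fun j _ =>
          mul_le_mul_of_nonneg_left (hvge j) (by simp [hm, min_le_right, sub_nonneg])
      calc (1 - ∑ j, m j) * I = ∑ j, (Q k j - m j) * I := by
            rw [← Finset.sum_mul, Finset.sum_sub_distrib, hQ_rowsum k]
        _ ≤ _ := this
    have h3 : Q.mulVec v i - Q.mulVec v k ≤ (1 - ∑ j, m j) * sp v := by
      rw [heq]
      have : (1 - ∑ j, m j) * sp v = (1 - ∑ j, m j) * S - (1 - ∑ j, m j) * I := by
        simp only [sp, ← hS, ← hI]; ring
      linarith
    calc Q.mulVec v i - Q.mulVec v k ≤ (1 - ∑ j, m j) * sp v := h3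
      _ ≤ (1 - (n : ℝ) * φ) * sp v :=
        mul_le_mul_of_nonneg_right (by linarith) hspv
  have hsup : (⨆ i, Q.mulVec v i) ≤ (1 - (n : ℝ) * φ) * sp v + ⨅ k, Q.mulVec v k := by
    refine ciSup_le fun i => ?_
    have h : Q.mulVec v i - (1 - (n : ℝ) * φ) * sp v ≤ ⨅ k, Q.mulVec v k :=
      le_ciInf fun k => by linarith [key i k]
    linarith
  simp only [sp] at hsup ⊢
  linarith
end

section
/- Let n ≥ 1, γ ∈ (0, 1], and let P′₁, …, P′_N be n×n real row-stochastic matrices. Let E be the n×n all-ones matrix, let v₀ ∈ ℝⁿ, and define v_t = γ (P′_t − E) v_{t−1} for t = 1, …, N. Suppose there exists φ with 0 < nφ ≤ 1 such that every entry of the ordered product M = P′_N ⋯ P′₁ satisfies M_{ij} ≥ φ. Then sp(v_N) ≤ γ^N (1 − nφ) · sp(v₀), where sp(w) = max_i w(i) − min_i w(i) is the span seminorm. -/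
lemma sp_bound {n : ℕ} (hn : 1 ≤ n) (u w : Fin n → ℝ) (s c : ℝ)
    (h1 : ∀ i, u i ≤ s * (⨆ j, w j) + c) (h2 : ∀ i, s * (⨅ j, w j) + c ≤ u i) :
    sp u ≤ s * sp w := by
  have : Nonempty (Fin n) := ⟨⟨0, hn⟩⟩
  have hsup : (⨆ i, u i) ≤ s * (⨆ j, w j) + c := ciSup_le h1
  have hinf : s * (⨅ j, w j) + c ≤ ⨅ i, u i := le_ciInf h2
  simp only [sp, mul_sub]
  linarith

lemma prod_rowsum {n : ℕ} (l : List (Matrix (Fin n) (Fin n) ℝ))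
    (h : ∀ A ∈ l, ∀ i, ∑ j, A i j = 1) : ∀ i, ∑ j, l.prod i j = 1 := by
  induction l with
  | nil => intro i; simp [Matrix.one_apply]
  | cons A l ih =>
    intro i
    have hA := h A List.mem_cons_self
    have ih' := ih (fun B hB => h B (List.mem_cons_of_mem _ hB))
    simp only [List.prod_cons, Matrix.mul_apply]
    rw [Finset.sum_comm]
    calc ∑ k, ∑ j, A i k * l.prod k j = ∑ k, A i k * ∑ j, l.prod k j := by
          simp [Finset.mul_sum]
      _ = 1 := by simp [ih', hA]

/-- With `γ ∈ (0,1]`, row-stochastic `P' 1, …, P' N`, all-ones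
matrix `E`, and iterates `v t = γ (P' t − E) v (t−1)`, if every entry of the
ordered product `M = P' N ⋯ P' 1` is at least `φ` with `0 < n φ ≤ 1`, then
`sp (v N) ≤ γ^N (1 − n φ) sp (v 0)`. -/
theorem value_iteration_span_contraction
    (n : ℕ) (hn : 1 ≤ n) (N : ℕ)
    (γ : ℝ) (hγ : γ ∈ Set.Ioc (0 : ℝ) 1)
    (P' : Fin N → Matrix (Fin n) (Fin n) ℝ)
    (hP_nonneg : ∀ t i j, 0 ≤ P' t i j)
    (hP_rowsum : ∀ t i, ∑ j, P' t i j = 1)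
    (v : Fin (N + 1) → Fin n → ℝ)
    (hv : ∀ t : Fin N,
      v t.succ = γ • ((P' t - Matrix.of (fun _ _ => (1 : ℝ))).mulVec (v t.castSucc)))
    (φ : ℝ)
    (hφpos : 0 < (n : ℝ) * φ) (hφle : (n : ℝ) * φ ≤ 1)
    (hM : ∀ i j, φ ≤ ((List.ofFn P').reverse.prod) i j) :
    sp (v (Fin.last N)) ≤ γ ^ N * (1 - (n : ℝ) * φ) * sp (v 0) := by
  have hne : Nonempty (Fin n) := ⟨⟨0, hn⟩⟩
  set M : Matrix (Fin n) (Fin n) ℝ := (List.ofFn P').reverse.prod with hMdef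
  -- key induction: v t = γ^t (M_t v0 + c)
  have key : ∀ t (ht : t ≤ N), ∃ c : ℝ, ∀ i,
      v ⟨t, Nat.lt_succ_of_le ht⟩ i
        = γ ^ t * ((((List.ofFn P').take t).reverse.prod).mulVec (v 0) i + c) := by
    intro t
    induction t with
    | zero =>
      intro ht
      refine ⟨0, fun i => ?_⟩
      simp [Matrix.one_mulVec, show (⟨0, Nat.lt_succ_of_le ht⟩ : Fin (N+1)) = 0 from rfl]
    | succ t ih =>
      intro ht
      obtain ⟨c, hc⟩ := ih (Nat.le_of_succ_le ht)
      set Mt := (((List.ofFn P').take t).reverse.prod) with hMt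
      have htN : t < N := ht
      have hstep := hv ⟨t, htN⟩
      have htake : (List.ofFn P').take (t + 1)
          = (List.ofFn P').take t ++ [P' ⟨t, htN⟩] := by
        rw [List.take_succ]
        congr 1
        simp [List.ofFnNthVal, htN]
      have hprod : ((List.ofFn P').take (t + 1)).reverse.prod = P' ⟨t, htN⟩ * Mt := by
        rw [htake, List.reverse_append]
        simp [hMt]
      set S : ℝ := ∑ j, Mt.mulVec (v 0) j with hS
      refine ⟨c - S - n * c, fun i => ?_⟩
      have hvi : v ⟨t + 1, Nat.lt_succ_of_le ht⟩ i
          = γ * ((P' ⟨t, htN⟩ - Matrix.of (fun _ _ => (1:ℝ))).mulVec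
              (v ⟨t, Nat.lt_succ_of_le (Nat.le_of_succ_le ht)⟩) i) := by
        have h1 : (⟨t, htN⟩ : Fin N).succ = (⟨t + 1, Nat.lt_succ_of_le ht⟩ : Fin (N+1)) := rfl
        have h2 : (⟨t, htN⟩ : Fin N).castSucc
            = (⟨t, Nat.lt_succ_of_le (Nat.le_of_succ_le ht)⟩ : Fin (N+1)) := rfl
        rw [← h1, ← h2, hstep]; rfl
      have hEmul : (Matrix.of (fun _ _ => (1:ℝ))).mulVec
          (v ⟨t, Nat.lt_succ_of_le (Nat.le_of_succ_le ht)⟩) i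
          = ∑ j, v ⟨t, Nat.lt_succ_of_le (Nat.le_of_succ_le ht)⟩ j := by
        simp [Matrix.mulVec, dotProduct]
      have hsumv : ∑ j, v ⟨t, Nat.lt_succ_of_le (Nat.le_of_succ_le ht)⟩ j
          = γ ^ t * (S + n * c) := by
        rw [Finset.sum_congr rfl (fun j _ => hc j)]
        rw [← Finset.mul_sum, Finset.sum_add_distrib, Finset.sum_const, Finset.card_univ,
          Fintype.card_fin, nsmul_eq_mul, hS]
      have hPmul : (P' ⟨t, htN⟩).mulVec
          (v ⟨t, Nat.lt_succ_of_le (Nat.le_of_succ_le ht)⟩) i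
          = γ ^ t * ((P' ⟨t, htN⟩ * Mt).mulVec (v 0) i + c) := by
        have hmm : (P' ⟨t, htN⟩ * Mt).mulVec (v 0) i
            = ∑ j, P' ⟨t, htN⟩ i j * Mt.mulVec (v 0) j := by
          rw [← Matrix.mulVec_mulVec]
          simp [Matrix.mulVec, dotProduct]
        calc (P' ⟨t, htN⟩).mulVec (v ⟨t, Nat.lt_succ_of_le (Nat.le_of_succ_le ht)⟩) i
            = ∑ j, P' ⟨t, htN⟩ i j * v ⟨t, Nat.lt_succ_of_le (Nat.le_of_succ_le ht)⟩ j := rfl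
          _ = ∑ j, P' ⟨t, htN⟩ i j * (γ ^ t * (Mt.mulVec (v 0) j + c)) :=
              Finset.sum_congr rfl (fun j _ => by rw [hc j])
          _ = γ ^ t * (∑ j, P' ⟨t, htN⟩ i j * Mt.mulVec (v 0) j)
              + (γ ^ t * c) * ∑ j, P' ⟨t, htN⟩ i j := by
              rw [Finset.mul_sum, Finset.mul_sum, ← Finset.sum_add_distrib]
              exact Finset.sum_congr rfl (fun j _ => by ring)
          _ = γ ^ t * ((P' ⟨t, htN⟩ * Mt).mulVec (v 0) i + c) := by
              rw [hP_rowsum, hmm]; ring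
      rw [hvi, Matrix.sub_mulVec, Pi.sub_apply, hEmul, hsumv, hPmul, hprod]
      ring
  obtain ⟨c, hc⟩ := key N le_rfl
  have htakeN : (List.ofFn P').take N = List.ofFn P' :=
    List.take_of_length_le (by simp)
  have hcN : ∀ i, v (Fin.last N) i = γ ^ N * (M.mulVec (v 0) i + c) := by
    intro i
    have := hc i
    rwa [htakeN, ← hMdef] at this
  -- row sums of M
  have hMrow : ∀ i, ∑ j, M i j = 1 := by
    refine prod_rowsum _ ?_
    intro A hA i
    rw [List.mem_reverse, List.mem_ofFn] at hA
    obtain ⟨t, rfl⟩ := hA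
    exact hP_rowsum t i
  have hsub : ∀ i, ∑ j, (M i j - φ) = 1 - (n : ℝ) * φ := by
    intro i
    rw [Finset.sum_sub_distrib, hMrow, Finset.sum_const]
    simp [mul_comm]
  have hγN : (0:ℝ) ≤ γ ^ N := pow_nonneg hγ.1.le N
  set S0 : ℝ := ∑ j, v 0 j with hS0
  have hub : ∀ j, v 0 j ≤ ⨆ k, v 0 k := fun j =>
    le_ciSup (Set.Finite.bddAbove (Set.finite_range _)) j
  have hlb : ∀ j, (⨅ k, v 0 k) ≤ v 0 j := fun j =>
    ciInf_le (Set.Finite.bddBelow (Set.finite_range _)) j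
  have hsplit : ∀ i, M.mulVec (v 0) i = (∑ j, (M i j - φ) * v 0 j) + φ * S0 := by
    intro i
    simp only [Matrix.mulVec, dotProduct, hS0, sub_mul,
      Finset.sum_sub_distrib, Finset.mul_sum]
    ring
  have h1 : ∀ i, v (Fin.last N) i
      ≤ (γ ^ N * (1 - (n:ℝ) * φ)) * (⨆ j, v 0 j) + γ ^ N * (φ * S0 + c) := by
    intro i
    have e2 : ∑ j, (M i j - φ) * v 0 j ≤ (1 - (n:ℝ) * φ) * (⨆ k, v 0 k) := by
      calc ∑ j, (M i j - φ) * v 0 j ≤ ∑ j, (M i j - φ) * (⨆ k, v 0 k) :=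
            Finset.sum_le_sum (fun j _ =>
              mul_le_mul_of_nonneg_left (hub j) (by linarith [hM i j]))
        _ = (1 - (n:ℝ) * φ) * (⨆ k, v 0 k) := by rw [← Finset.sum_mul, hsub]
    calc v (Fin.last N) i = γ ^ N * (M.mulVec (v 0) i + c) := hcN i
      _ ≤ γ ^ N * ((1 - (n:ℝ) * φ) * (⨆ k, v 0 k) + φ * S0 + c) := by
          apply mul_le_mul_of_nonneg_left _ hγN
          rw [hsplit i]; linarith
      _ = (γ ^ N * (1 - (n:ℝ) * φ)) * (⨆ j, v 0 j) + γ ^ N * (φ * S0 + c) := by ring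
  have h2 : ∀ i, (γ ^ N * (1 - (n:ℝ) * φ)) * (⨅ j, v 0 j) + γ ^ N * (φ * S0 + c)
      ≤ v (Fin.last N) i := by
    intro i
    have e2 : (1 - (n:ℝ) * φ) * (⨅ k, v 0 k) ≤ ∑ j, (M i j - φ) * v 0 j := by
      calc (1 - (n:ℝ) * φ) * (⨅ k, v 0 k) = ∑ j, (M i j - φ) * (⨅ k, v 0 k) := by
            rw [← Finset.sum_mul, hsub]
        _ ≤ ∑ j, (M i j - φ) * v 0 j :=
            Finset.sum_le_sum (fun j _ =>
              mul_le_mul_of_nonneg_left (hlb j) (by linarith [hM i j]))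
    calc (γ ^ N * (1 - (n:ℝ) * φ)) * (⨅ j, v 0 j) + γ ^ N * (φ * S0 + c)
        = γ ^ N * ((1 - (n:ℝ) * φ) * (⨅ k, v 0 k) + φ * S0 + c) := by ring
      _ ≤ γ ^ N * (M.mulVec (v 0) i + c) := by
          apply mul_le_mul_of_nonneg_left _ hγN
          rw [hsplit i]; linarith
      _ = v (Fin.last N) i := (hcN i).symm
  exact sp_bound hn _ _ _ _ h1 h2
end

section
/- Let n ≥ 1, γ ∈ (0, 1), C = nγ + (1 − γ), let P be an n×n real row-stochastic matrix, and let R ∈ ℝⁿ. Suppose V ∈ ℝⁿ satisfies the Bellman equation V = R + γ P V, and v ∈ ℝⁿ satisfies, for every state s, v(s)/C = R(s) − γ v_Σ / C + γ ∑_i P(s,i) v(i)/C, where v_Σ = ∑_i v(i). Then for every s, V(s) = v(s)/C + γ v_Σ / (C (1 − γ)). -/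
/-- Relation between the classical discounted values `V`
(solving `V = R + γ P V`) and the paper's new values `v` (solving
`v(s)/C = R(s) − γ v_Σ/C + γ ∑_i P(s,i) v(i)/C` with `C = nγ + (1−γ)`):
for every state `s`, `V(s) = v(s)/C + γ v_Σ / (C (1 − γ))`. -/
theorem new_values_to_old_values
    (n : ℕ) (hn : 1 ≤ n)
    (γ : ℝ) (hγ : γ ∈ Set.Ioo (0 : ℝ) 1)
    (C : ℝ) (hC : C = n * γ + (1 - γ))
    (P : Matrix (Fin n) (Fin n) ℝ)
    (hP_nonneg : ∀ i j, 0 ≤ P i j)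
    (hP_rowsum : ∀ i, ∑ j, P i j = 1)
    (R V v : Fin n → ℝ)
    (hV : ∀ s, V s = R s + γ * ∑ i, P s i * V i)
    (hv : ∀ s, v s / C = R s - γ * (∑ i, v i) / C + γ * ∑ i, P s i * (v i / C)) :
    ∀ s, V s = v s / C + γ * (∑ i, v i) / (C * (1 - γ)) := by
  obtain ⟨hγ0, hγ1⟩ := hγ
  have hCpos : 0 < C := by
    have : (1 : ℝ) ≤ (n : ℝ) := by exact_mod_cast hn
    nlinarith
  have h1γ : (0:ℝ) < 1 - γ := by linarith
  set vS := ∑ i, v i with hvS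
  set W : Fin n → ℝ := fun s => v s / C + γ * vS / (C * (1 - γ)) with hWdef
  -- W satisfies the Bellman equation
  have hW : ∀ s, W s = R s + γ * ∑ i, P s i * W i := by
    intro s
    have hsum : ∑ i, P s i * W i
        = (∑ i, P s i * (v i / C)) + γ * vS / (C * (1 - γ)) := by
      have : ∑ i, P s i * W i
          = ∑ i, (P s i * (v i / C) + P s i * (γ * vS / (C * (1 - γ)))) := by
        apply Finset.sum_congr rfl; intro i _; simp [W]; ring
      rw [this, Finset.sum_add_distrib, ← Finset.sum_mul, hP_rowsum, one_mul]
    rw [hsum]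
    have hvs := hv s
    have : γ * ∑ i, P s i * (v i / C) = v s / C - R s + γ * vS / C := by
      linarith
    rw [mul_add, this]
    simp only [W]
    field_simp
    ring
  -- uniqueness via contraction argument on the max of |V - W|
  set d : Fin n → ℝ := fun s => V s - W s with hddef
  have hd : ∀ s, d s = γ * ∑ i, P s i * d i := by
    intro s
    have : ∑ i, P s i * d i = (∑ i, P s i * V i) - ∑ i, P s i * W i := by
      rw [← Finset.sum_sub_distrib]
      apply Finset.sum_congr rfl; intro i _; simp [d]; ring
    rw [this]
    have h1 := hV s; have h2 := hW s
    simp only [d]; linarith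
  have hne : (Finset.univ : Finset (Fin n)).Nonempty := by
    simpa [Finset.univ_nonempty_iff] using Fin.pos_iff_nonempty.mp (by omega)
  obtain ⟨i0, -, hi0⟩ := Finset.exists_max_image Finset.univ (fun i => |d i|) hne
  have hmax : ∀ j, |d j| ≤ |d i0| := fun j => hi0 j (Finset.mem_univ j)
  have hkey : |d i0| ≤ γ * |d i0| := by
    calc |d i0| = γ * |∑ i, P i0 i * d i| := by
          rw [hd i0, abs_mul, abs_of_pos hγ0]
      _ ≤ γ * ∑ i, |P i0 i * d i| := by
          apply mul_le_mul_of_nonneg_left (Finset.abs_sum_le_sum_abs _ _) hγ0.le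
      _ ≤ γ * ∑ i, P i0 i * |d i0| := by
          apply mul_le_mul_of_nonneg_left _ hγ0.le
          apply Finset.sum_le_sum
          intro i _
          rw [abs_mul, abs_of_nonneg (hP_nonneg i0 i)]
          exact mul_le_mul_of_nonneg_left (hmax i) (hP_nonneg i0 i)
      _ = γ * |d i0| := by rw [← Finset.sum_mul, hP_rowsum, one_mul]
  have hzero : |d i0| = 0 := by
    by_contra h
    have : 0 < |d i0| := lt_of_le_of_ne (abs_nonneg _) (Ne.symm h)
    nlinarith
  intro s
  have : |d s| = 0 := le_antisymm (hzero ▸ hmax s) (abs_nonneg _)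
  have hds : d s = 0 := abs_eq_zero.mp this
  have : V s - W s = 0 := hds
  simp only [W] at this
  linarith
end

section
/- Let n ≥ 1, γ ∈ (0, 1), C = nγ + (1 − γ), let P be an n×n real row-stochastic matrix, and let R ∈ ℝⁿ. Suppose V ∈ ℝⁿ satisfies V = R + γ P V, and v ∈ ℝⁿ satisfies, for every state s, v(s)/C = R(s) − γ v_Σ / C + γ ∑_i P(s,i) v(i)/C, where v_Σ = ∑_i v(i). Then ∑_s V(s) = v_Σ / (1 − γ). -/
/-- Uniqueness lemma: the only fixed point of `x = γ P x` for a row-stochastic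
`P` and `0 < γ < 1` is `x = 0`. -/
lemma fixed_point_zero
    (n : ℕ) (hn : 1 ≤ n)
    (γ : ℝ) (hγ0 : 0 < γ) (hγ1 : γ < 1)
    (P : Matrix (Fin n) (Fin n) ℝ)
    (hP_nonneg : ∀ i j, 0 ≤ P i j)
    (hP_rowsum : ∀ i, ∑ j, P i j = 1)
    (x : Fin n → ℝ) (hx : ∀ s, x s = γ * ∑ i, P s i * x i) :
    ∀ s, x s = 0 := by
  have hne : (Finset.univ : Finset (Fin n)).Nonempty := by
    simpa [Finset.univ_nonempty_iff] using Fin.pos_iff_nonempty.mp hn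
  obtain ⟨i₀, -, hmax⟩ := Finset.exists_max_image Finset.univ (fun i => |x i|) hne
  have key : |x i₀| ≤ γ * |x i₀| := by
    calc |x i₀| = |γ * ∑ i, P i₀ i * x i| := by rw [← hx i₀]
      _ = γ * |∑ i, P i₀ i * x i| := by rw [abs_mul, abs_of_pos hγ0]
      _ ≤ γ * ∑ i, |P i₀ i * x i| :=
          mul_le_mul_of_nonneg_left (Finset.abs_sum_le_sum_abs _ _) hγ0.le
      _ = γ * ∑ i, P i₀ i * |x i| := by
          congr 1; exact Finset.sum_congr rfl fun i _ => by
            rw [abs_mul, abs_of_nonneg (hP_nonneg i₀ i)]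
      _ ≤ γ * ∑ i, P i₀ i * |x i₀| := by
          apply mul_le_mul_of_nonneg_left _ hγ0.le
          apply Finset.sum_le_sum
          intro i _
          exact mul_le_mul_of_nonneg_left (hmax i (Finset.mem_univ i)) (hP_nonneg i₀ i)
      _ = γ * |x i₀| := by rw [← Finset.sum_mul, hP_rowsum, one_mul]
  have h0 : |x i₀| = 0 := by nlinarith [abs_nonneg (x i₀)]
  intro s
  have := hmax s (Finset.mem_univ s)
  rw [h0] at this
  exact abs_nonpos_iff.mp this

/-- With `V` the classical discounted values and `v` the
paper's new values (`C = nγ + (1−γ)`), the total value satisfies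
`∑_s V(s) = v_Σ / (1 − γ)`. -/
theorem sum_old_values_eq_new_value_sum
    (n : ℕ) (hn : 1 ≤ n)
    (γ : ℝ) (hγ : γ ∈ Set.Ioo (0 : ℝ) 1)
    (C : ℝ) (hC : C = n * γ + (1 - γ))
    (P : Matrix (Fin n) (Fin n) ℝ)
    (hP_nonneg : ∀ i j, 0 ≤ P i j)
    (hP_rowsum : ∀ i, ∑ j, P i j = 1)
    (R V v : Fin n → ℝ)
    (hV : ∀ s, V s = R s + γ * ∑ i, P s i * V i)
    (hv : ∀ s, v s / C = R s - γ * (∑ i, v i) / C + γ * ∑ i, P s i * (v i / C)) :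
    ∑ s, V s = (∑ i, v i) / (1 - γ) := by
  obtain ⟨hγ0, hγ1⟩ := hγ
  have h1γ : (0:ℝ) < 1 - γ := by linarith
  have hCpos : 0 < C := by
    have : (1:ℝ) ≤ (n:ℝ) := by exact_mod_cast hn
    nlinarith
  set vS := ∑ i, v i with hvS
  set c : ℝ := γ * vS / (C * (1 - γ)) with hc
  set x : Fin n → ℝ := fun s => V s - v s / C - c with hxdef
  have hCne : C ≠ 0 := ne_of_gt hCpos
  have h1γne : (1 : ℝ) - γ ≠ 0 := ne_of_gt h1γ
  have hgc : γ * vS / C = (1 - γ) * c := by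
    rw [hc]; field_simp
  have hx : ∀ s, x s = γ * ∑ i, P s i * x i := by
    intro s
    have h1 : ∑ i, P s i * x i
        = (∑ i, P s i * V i) - (∑ i, P s i * (v i / C)) - c := by
      calc ∑ i, P s i * x i
          = ∑ i, (P s i * V i - P s i * (v i / C) - P s i * c) :=
            Finset.sum_congr rfl fun i _ => by simp only [hxdef]; ring
        _ = (∑ i, P s i * V i) - (∑ i, P s i * (v i / C)) - c := by
            rw [Finset.sum_sub_distrib, Finset.sum_sub_distrib, ← Finset.sum_mul,
              hP_rowsum, one_mul]
    rw [h1]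
    simp only [hxdef]
    linear_combination (hV s) - (hv s) + hgc
  have hx0 := fixed_point_zero n hn γ hγ0 hγ1 P hP_nonneg hP_rowsum x hx
  have hVeq : ∀ s, V s = v s / C + c := by
    intro s
    have := hx0 s
    simp only [hxdef] at this
    linarith
  have hsum : ∑ s, V s = vS / C + n * c := by
    rw [Finset.sum_congr rfl fun s _ => hVeq s, Finset.sum_add_distrib,
      ← Finset.sum_div, Finset.sum_const, Finset.card_univ, Fintype.card_fin,
      nsmul_eq_mul]
  rw [hsum, hc]
  subst hC
  field_simp
  ring
end

section
/- Let n ≥ 1, γ ∈ (0, 1), C = nγ + (1 − γ), let P be an n×n real row-stochastic matrix, and let R ∈ ℝⁿ. Suppose V ∈ ℝⁿ satisfies V = R + γ P V, and v ∈ ℝⁿ satisfies, for every state s, v(s)/C = R(s) − γ v_Σ / C + γ ∑_i P(s,i) v(i)/C, where v_Σ = ∑_i v(i). Write V̄ = (∑_i V(i))/n and v̄ = v_Σ / n. Then for every s, V(s) − V̄ = (v(s) − v̄)/C. -/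
/-- With `V` the classical discounted values and `v` the
paper's new values (`C = nγ + (1−γ)`), the centered values agree up to the
factor `C`: `V(s) − V̄ = (v(s) − v̄)/C`, where `V̄, v̄` are the means. -/
theorem centered_values_relation
    (n : ℕ) (hn : 1 ≤ n)
    (γ : ℝ) (hγ : γ ∈ Set.Ioo (0 : ℝ) 1)
    (C : ℝ) (hC : C = n * γ + (1 - γ))
    (P : Matrix (Fin n) (Fin n) ℝ)
    (hP_nonneg : ∀ i j, 0 ≤ P i j)
    (hP_rowsum : ∀ i, ∑ j, P i j = 1)
    (R V v : Fin n → ℝ)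
    (hV : ∀ s, V s = R s + γ * ∑ i, P s i * V i)
    (hv : ∀ s, v s / C = R s - γ * (∑ i, v i) / C + γ * ∑ i, P s i * (v i / C)) :
    ∀ s, V s - (∑ i, V i) / n = (v s - (∑ i, v i) / n) / C := by
  obtain ⟨hγ0, hγ1⟩ := hγ
  have hne : Nonempty (Fin n) := ⟨⟨0, hn⟩⟩
  have hn1 : (1:ℝ) ≤ (n:ℝ) := by exact_mod_cast hn
  have hnne : (n:ℝ) ≠ 0 := by linarith
  have h1γ : (1:ℝ) - γ ≠ 0 := by linarith
  have hCpos : 0 < C := by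
    rw [hC]; nlinarith
  have hCne : C ≠ 0 := ne_of_gt hCpos
  set c : ℝ := γ * (∑ i, v i) / C with hc
  set k : ℝ := c / (1 - γ) with hk
  set E : Fin n → ℝ := fun s => V s - v s / C - k with hEdef
  have hE : ∀ s, E s = γ * ∑ i, P s i * E i := by
    intro s
    have h1 := hV s
    have h2 := hv s
    have hsum : ∑ i, P s i * E i
        = (∑ i, P s i * V i) - (∑ i, P s i * (v i / C)) - k := by
      have : ∀ i, P s i * E i = P s i * V i - P s i * (v i / C) - P s i * k := by
        intro i; simp only [hEdef]; ring
      rw [Finset.sum_congr rfl (fun i _ => this i)]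
      rw [Finset.sum_sub_distrib, Finset.sum_sub_distrib, ← Finset.sum_mul,
        hP_rowsum s, one_mul]
    simp only [hEdef]
    rw [hsum]
    have hkc : γ * k + c = k := by
      have h' : k * (1 - γ) = c := by rw [hk]; exact div_mul_cancel₀ c h1γ
      linear_combination (-1 : ℝ) * h'
    have : V s - v s / C = c + γ * ((∑ i, P s i * V i) - (∑ i, P s i * (v i / C))) := by
      rw [h1, h2]; simp only [hc]; ring
    rw [mul_sub, mul_sub] at *
    linarith [this]
  have hE0 : ∀ s, E s = 0 := by
    obtain ⟨s0, -, hs0⟩ := Finset.exists_max_image Finset.univ (fun i => |E i|)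
      ⟨Classical.arbitrary (Fin n), Finset.mem_univ _⟩
    have hmax : ∀ i, |E i| ≤ |E s0| := fun i => hs0 i (Finset.mem_univ i)
    have hbound : |E s0| ≤ γ * |E s0| := by
      calc |E s0| = γ * |∑ i, P s0 i * E i| := by
            rw [hE s0, abs_mul, abs_of_pos hγ0]
        _ ≤ γ * ∑ i, P s0 i * |E s0| := by
            apply mul_le_mul_of_nonneg_left _ (le_of_lt hγ0)
            calc |∑ i, P s0 i * E i| ≤ ∑ i, |P s0 i * E i| := Finset.abs_sum_le_sum_abs _ _
              _ ≤ ∑ i, P s0 i * |E s0| := by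
                  apply Finset.sum_le_sum
                  intro i _
                  rw [abs_mul, abs_of_nonneg (hP_nonneg s0 i)]
                  exact mul_le_mul_of_nonneg_left (hmax i) (hP_nonneg s0 i)
        _ = γ * |E s0| := by rw [← Finset.sum_mul, hP_rowsum s0, one_mul]
    have h0 : |E s0| = 0 := by nlinarith [abs_nonneg (E s0)]
    intro s
    have := hmax s
    rw [h0] at this
    exact abs_eq_zero.mp (le_antisymm this (abs_nonneg _))
  have hD : ∀ s, V s = v s / C + k := by
    intro s
    have := hE0 s
    simp only [hEdef] at this
    linarith
  intro s
  have hsumV : ∑ i, V i = (∑ i, v i) / C + n * k := by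
    rw [Finset.sum_congr rfl (fun i _ => hD i), Finset.sum_add_distrib,
      Finset.sum_div]
    simp [Finset.sum_const, mul_comm]
  rw [hD s, hsumV]
  field_simp
  ring
end

section
/- Let n ≥ 1, let P be an n×n real row-stochastic matrix with ker(I − P) = span{𝟙}, and let R ∈ ℝⁿ. Suppose ρ ∈ ℝ and h ∈ ℝⁿ satisfy the average-reward Bellman equation h + ρ𝟙 = R + P h, and u ∈ ℝⁿ satisfies (I + E − P) u = R, where E is the all-ones matrix. Then ρ = ∑_i u(i), and there exists c ∈ ℝ such that u = h + c𝟙. -/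
/-- Let `P` be row-stochastic with `ker (I − P) = span {𝟙}`
(unichain). If `(ρ, h)` solves the average-reward Bellman equation
`h + ρ𝟙 = R + P h` and `u` solves `(I + E − P) u = R`, then `ρ = ∑_i u(i)`
and `u = h + c𝟙` for some constant `c`. -/
theorem new_values_solve_average_reward_bellman
    (n : ℕ) (hn : 1 ≤ n)
    (P : Matrix (Fin n) (Fin n) ℝ)
    (hP_nonneg : ∀ i j, 0 ≤ P i j)
    (hP_rowsum : ∀ i, ∑ j, P i j = 1)
    (hker : LinearMap.ker (Matrix.mulVecLin (1 - P)) =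
      Submodule.span ℝ {(fun _ => (1 : ℝ) : Fin n → ℝ)})
    (R : Fin n → ℝ) (ρ : ℝ) (h u : Fin n → ℝ)
    (hbellman : h + ρ • (fun _ => (1 : ℝ)) = R + P.mulVec h)
    (hu : (1 + Matrix.of (fun _ _ => (1 : ℝ)) - P).mulVec u = R) :
    ρ = ∑ i, u i ∧ ∃ c : ℝ, u = h + c • (fun _ => (1 : ℝ)) := by
  have hne : Nonempty (Fin n) := ⟨⟨0, hn⟩⟩
  set s := ∑ i, u i with hs
  set w : Fin n → ℝ := fun i => u i - h i with hw
  have key : ∀ i, w i - ∑ j, P i j * w j = ρ - s := by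
    intro i
    have h1 := congrFun hbellman i
    have h2 := congrFun hu i
    simp only [Pi.add_apply, Pi.smul_apply, smul_eq_mul, mul_one,
      Matrix.mulVec, dotProduct, Matrix.sub_apply, Matrix.add_apply,
      Matrix.one_apply, Matrix.of_apply] at h1 h2
    have e2 : ∑ j, ((if i = j then (1:ℝ) else 0) + 1 - P i j) * u j
        = u i + s - ∑ j, P i j * u j := by
      rw [hs]
      rw [Finset.sum_congr rfl (fun j _ => by split <;> ring :
        ∀ j ∈ Finset.univ, ((if i = j then (1:ℝ) else 0) + 1 - P i j) * u j
          = (if i = j then u j else 0) + u j - P i j * u j)]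
      simp [Finset.sum_sub_distrib, Finset.sum_add_distrib]
    rw [e2] at h2
    have e3 : ∑ j, P i j * w j = (∑ j, P i j * u j) - ∑ j, P i j * h j := by
      simp [hw, mul_sub, Finset.sum_sub_distrib]
    rw [hw]
    simp only [e3]
    linarith
  have hρs : ρ = s := by
    obtain ⟨i0, -, hi0⟩ := Finset.exists_max_image Finset.univ w Finset.univ_nonempty
    obtain ⟨i1, -, hi1⟩ := Finset.exists_min_image Finset.univ w Finset.univ_nonempty
    have hmax : ∑ j, P i0 j * w j ≤ w i0 := by
      calc ∑ j, P i0 j * w j ≤ ∑ j, P i0 j * w i0 :=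
            Finset.sum_le_sum (fun j _ => mul_le_mul_of_nonneg_left
              (hi0 j (Finset.mem_univ j)) (hP_nonneg i0 j))
        _ = w i0 := by rw [← Finset.sum_mul, hP_rowsum, one_mul]
    have hmin : w i1 ≤ ∑ j, P i1 j * w j := by
      calc w i1 = ∑ j, P i1 j * w i1 := by rw [← Finset.sum_mul, hP_rowsum, one_mul]
        _ ≤ ∑ j, P i1 j * w j :=
            Finset.sum_le_sum (fun j _ => mul_le_mul_of_nonneg_left
              (hi1 j (Finset.mem_univ j)) (hP_nonneg i1 j))
    have k0 := key i0
    have k1 := key i1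
    linarith
  refine ⟨hρs, ?_⟩
  have hwker : w ∈ LinearMap.ker (Matrix.mulVecLin (1 - P)) := by
    rw [LinearMap.mem_ker]
    funext i
    have := key i
    rw [hρs, sub_self] at this
    simpa [Matrix.mulVecLin_apply, Matrix.mulVec, dotProduct,
      Matrix.sub_apply, Matrix.one_apply, sub_mul, Finset.sum_sub_distrib,
      Finset.sum_ite_eq, sub_eq_zero] using this
  rw [hker, Submodule.mem_span_singleton] at hwker
  obtain ⟨c, hc⟩ := hwker
  refine ⟨c, ?_⟩
  funext i
  have := congrFun hc i
  simp only [Pi.smul_apply, smul_eq_mul, mul_one, hw] at this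
  simp only [Pi.add_apply, Pi.smul_apply, smul_eq_mul, mul_one]
  linarith
end

section
/- Let n ≥ 1, let P be an n×n real row-stochastic matrix with ker(I − P) = span{𝟙}, and let E be the n×n all-ones matrix. Then for every R ∈ ℝⁿ there exists a unique u ∈ ℝⁿ satisfying (I + E − P) u = R; equivalently, the average-reward policy-evaluation equation u = R − (∑_i u(i))𝟙 + P u has a unique solution. -/
/-- If `P` is row-stochastic with `ker (I − P) = span {𝟙}`
(unichain), then for every reward vector `R` the average-reward
policy-evaluation equation `(I + E − P) u = R` has a unique solution `u`. -/
theorem unichain_policy_evaluation_unique_solution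
    (n : ℕ) (hn : 1 ≤ n)
    (P : Matrix (Fin n) (Fin n) ℝ)
    (hP_nonneg : ∀ i j, 0 ≤ P i j)
    (hP_rowsum : ∀ i, ∑ j, P i j = 1)
    (hker : LinearMap.ker (Matrix.mulVecLin (1 - P)) =
      Submodule.span ℝ {(fun _ => (1 : ℝ) : Fin n → ℝ)}) :
    ∀ R : Fin n → ℝ, ∃! u : Fin n → ℝ,
      (1 + Matrix.of (fun _ _ => (1 : ℝ)) - P).mulVec u = R := by
  set A : Matrix (Fin n) (Fin n) ℝ := 1 + Matrix.of (fun _ _ => (1 : ℝ)) - P with hA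
  -- powers of P are row-stochastic
  have hpow : ∀ k : ℕ, (∀ i j, 0 ≤ (P ^ k) i j) ∧ (∀ i, ∑ j, (P ^ k) i j = 1) := by
    intro k
    induction k with
    | zero =>
      constructor
      · intro i j; simp [Matrix.one_apply]; split <;> norm_num
      · intro i; simp [Matrix.one_apply]
    | succ k ih =>
      constructor
      · intro i j
        rw [pow_succ, Matrix.mul_apply]
        exact Finset.sum_nonneg fun l _ => mul_nonneg (ih.1 i l) (hP_nonneg l j)
      · intro i
        simp only [pow_succ, Matrix.mul_apply]
        rw [Finset.sum_comm]
        calc ∑ l, ∑ j, (P ^ k) i l * P l j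
            = ∑ l, (P ^ k) i l * ∑ j, P l j := by
              simp [Finset.mul_sum]
          _ = ∑ l, (P ^ k) i l := by simp [hP_rowsum]
          _ = 1 := ih.2 i
  -- injectivity of A.mulVecLin
  have hinj : Function.Injective A.mulVecLin := by
    rw [injective_iff_map_eq_zero]
    intro u hu
    have hu' : A.mulVec u = 0 := by rwa [Matrix.mulVecLin_apply] at hu
    set s : ℝ := ∑ i, u i with hs
    have hEv : (Matrix.of (fun _ _ => (1 : ℝ)) : Matrix (Fin n) (Fin n) ℝ).mulVec u
        = fun _ => s := by
      funext i
      simp [Matrix.mulVec, dotProduct, hs]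
    have h1 : P.mulVec u = fun j => u j + s := by
      funext i
      have := congrFun hu' i
      rw [hA, Matrix.sub_mulVec, Matrix.add_mulVec, Matrix.one_mulVec, hEv] at this
      have := this
      simp only [Pi.sub_apply, Pi.add_apply, Pi.zero_apply] at this
      linarith
    -- iteration: u = P^k u - k s
    have hiter : ∀ k : ℕ, ∀ i, u i = ((P ^ k).mulVec u) i - k * s := by
      intro k
      induction k with
      | zero => intro i; simp [Matrix.one_mulVec]
      | succ k ih =>
        intro i
        have h2 : ((P ^ (k + 1)).mulVec u) i = ((P ^ k).mulVec (P.mulVec u)) i := by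
          rw [Matrix.mulVec_mulVec, ← pow_succ]
        have h3 : ((P ^ k).mulVec (P.mulVec u)) i = ((P ^ k).mulVec u) i + s := by
          rw [h1]
          simp only [Matrix.mulVec, dotProduct]
          rw [show ∑ j, (P ^ k) i j * (u j + s) = (∑ j, (P ^ k) i j * u j) + (∑ j, (P ^ k) i j) * s by
            rw [Finset.sum_mul]; rw [← Finset.sum_add_distrib]; congr 1; funext j; ring]
          rw [(hpow k).2 i]; ring
        have := ih i
        push_cast
        linarith [this, h2, h3]
    -- boundedness of P^k u
    set M : ℝ := ∑ j, |u j| with hM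
    have hbd : ∀ k : ℕ, ∀ i, |((P ^ k).mulVec u) i| ≤ M := by
      intro k i
      have hle : ∀ j, (P ^ k) i j ≤ 1 := by
        intro j
        calc (P ^ k) i j ≤ ∑ l, (P ^ k) i l :=
              Finset.single_le_sum (fun l _ => (hpow k).1 i l) (Finset.mem_univ j)
          _ = 1 := (hpow k).2 i
      calc |((P ^ k).mulVec u) i| ≤ ∑ j, |(P ^ k) i j * u j| := by
            simp only [Matrix.mulVec, dotProduct]
            exact Finset.abs_sum_le_sum_abs _ _
        _ ≤ ∑ j, |u j| := by
            apply Finset.sum_le_sum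
            intro j _
            rw [abs_mul, abs_of_nonneg ((hpow k).1 i j)]
            calc (P ^ k) i j * |u j| ≤ 1 * |u j| :=
                  mul_le_mul_of_nonneg_right (hle j) (abs_nonneg _)
              _ = |u j| := one_mul _
        _ = M := rfl
    -- s = 0
    have hs0 : s = 0 := by
      by_contra hsne
      have i0 : Fin n := ⟨0, hn⟩
      obtain ⟨k, hk⟩ := exists_nat_gt ((M + |u i0|) / |s|)
      have habs : |s| > 0 := abs_pos.mpr hsne
      have hk' : (M + |u i0|) < k * |s| := by
        rw [div_lt_iff₀ habs] at hk
        linarith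
      have h4 := hiter k i0
      have h5 : |(k : ℝ) * s| = |((P ^ k).mulVec u) i0 - u i0| := by
        rw [h4]; ring_nf
      have h6 : |((P ^ k).mulVec u) i0 - u i0| ≤ M + |u i0| := by
        calc |((P ^ k).mulVec u) i0 - u i0|
            ≤ |((P ^ k).mulVec u) i0| + |u i0| := abs_sub _ _
          _ ≤ M + |u i0| := by linarith [hbd k i0]
      rw [abs_mul, Nat.abs_cast] at h5
      linarith [h5 ▸ h6]
    -- now (1 - P) u = 0, so u ∈ span 𝟙
    have hker' : (1 - P).mulVec u = 0 := by
      funext i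
      rw [Matrix.sub_mulVec, Matrix.one_mulVec]
      have := congrFun h1 i
      simp only [Pi.sub_apply, Pi.zero_apply]
      rw [this, hs0]; ring
    have hmem : u ∈ LinearMap.ker (Matrix.mulVecLin (1 - P)) := by
      rw [LinearMap.mem_ker, Matrix.mulVecLin_apply, hker']
    rw [hker, Submodule.mem_span_singleton] at hmem
    obtain ⟨c, hc⟩ := hmem
    have hsum : s = n * c := by
      rw [hs, ← hc]
      simp [mul_comm]
    have hc0 : c = 0 := by
      have hnpos : (0 : ℝ) < n := by exact_mod_cast hn
      rw [hs0] at hsum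
      rcases mul_eq_zero.mp hsum.symm with h | h
      · exact absurd h hnpos.ne'
      · exact h
    rw [← hc, hc0]
    funext i; simp
  have hsurj : Function.Surjective A.mulVecLin :=
    LinearMap.injective_iff_surjective.mp hinj
  intro R
  obtain ⟨u, hu⟩ := hsurj R
  refine ⟨u, by rwa [Matrix.mulVecLin_apply] at hu, fun v hv => ?_⟩
  apply hinj
  rw [Matrix.mulVecLin_apply, Matrix.mulVecLin_apply, hv, ← hu, Matrix.mulVecLin_apply]
end
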